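/- arXiv:2205.08079 — 2 statements merged into one kernel-verified Lean document; each statement's English description precedes it below -/
import Mathlib

section
/- If a matching μ has a partial preimage H(μ) that is closed under weakly better replies under the man-proposing deferred acceptance mechanism, then μ is individually rational with respect to the true preferences. -/
open scoped Classical

/-- A marriage problem's (strict) preference profile, given by injective rank
functions over potential partners plus the option `none` of staying single
(lower rank = more preferred). -/
structure Pref (M W : Type) where
  mrank : M → Option W → ℕ
  wrank : W → Option M → ℕ
  minj : ∀ a x y, mrank a x = mrank a y → x = y
  winj : ∀ b x y, wrank b x = wrank b y → x = y

/-- A one-to-one matching between `M` and `W` (with `none` = single). -/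
structure Matching (M W : Type) where
  mu : M → Option W
  nu : W → Option M
  consistent : ∀ a b, mu a = some b ↔ nu b = some a

/-- No player strictly prefers being single to the assigned partner. -/
def IndivRational {M W : Type} (P : Pref M W) (μ : Matching M W) : Prop :=
  (∀ a, ¬ P.mrank a none < P.mrank a (μ.mu a)) ∧
  (∀ b, ¬ P.wrank b none < P.wrank b (μ.nu b))

/-- The pair `(a, b)` blocks `μ`. -/
def Blocks {M W : Type} (P : Pref M W) (μ : Matching M W) (a : M) (b : W) : Prop :=
  P.mrank a (some b) < P.mrank a (μ.mu a) ∧ P.wrank b (some a) < P.wrank b (μ.nu b)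

/-- Stability: individual rationality together with absence of blocking pairs. -/
def StableMatching {M W : Type} (P : Pref M W) (μ : Matching M W) : Prop :=
  IndivRational P μ ∧ ∀ a b, ¬ Blocks P μ a b

noncomputable section

variable {M W : Type} [Fintype M] [Fintype W]

/-- `b` is acceptable to man `a`. -/
def mAcc (P : Pref M W) (a : M) (b : W) : Prop := P.mrank a (some b) < P.mrank a none

/-- `a` is acceptable to woman `b`. -/
def wAcc (P : Pref M W) (b : W) (a : M) : Prop := P.wrank b (some a) < P.wrank b none

/-- The state of the man-proposing deferred acceptance algorithm:
for each man, the index of the next woman on his list to propose to,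
and for each woman, the proposer she currently (tentatively) holds. -/
structure DAState (M W : Type) where
  next : M → ℕ
  hold : W → Option M

/-- A man is free if no woman currently holds him. -/
def IsFree (s : DAState M W) (a : M) : Prop := ∀ b, s.hold b ≠ some a

/-- The `k`-th woman (0-indexed) on man `a`'s list of acceptable women,
in decreasing order of preference. -/
def target (P : Pref M W) (a : M) (k : ℕ) : Option W :=
  if h : ∃ b : W, mAcc P a b ∧
      (Finset.univ.filter fun b' => mAcc P a b' ∧
        P.mrank a (some b') < P.mrank a (some b)).card = k
  then some h.choose else none

/-- Woman `b`'s most preferred acceptable man in the finite set `c` (if any). -/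
def best (P : Pref M W) (b : W) (c : Finset M) : Option M :=
  if h : ∃ a ∈ c, wAcc P b a ∧ ∀ a' ∈ c, wAcc P b a' → P.wrank b (some a) ≤ P.wrank b (some a')
  then some h.choose else none

/-- One round of the man-proposing deferred acceptance algorithm: every free
man proposes to the next woman on his list; every woman holds the best
acceptable man among her current proposers and the man she held before. -/
def daStep (P : Pref M W) (s : DAState M W) : DAState M W where
  next a := if IsFree s a ∧ (target P a (s.next a)).isSome then s.next a + 1 else s.next a
  hold b := best P b
    ((Finset.univ.filter fun a => IsFree s a ∧ target P a (s.next a) = some b) ∪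
      (s.hold b).toFinset)

/-- The algorithm terminates when no free man has anyone left to propose to. -/
def Finished (P : Pref M W) (s : DAState M W) : Prop :=
  ∀ a, IsFree s a → target P a (s.next a) = none

/-- Iterate the deferred acceptance rounds (with fuel). -/
def daRun (P : Pref M W) : ℕ → DAState M W → DAState M W
  | 0, s => s
  | n + 1, s => if Finished P s then s else daRun P n (daStep P s)

/-- The initial state: every man is free and about to propose to his favorite. -/
def daInit : DAState M W := ⟨fun _ => 0, fun _ => none⟩

/-- The final state of the man-proposing deferred acceptance algorithm
(the fuel is enough for the algorithm to have terminated). -/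
def daFinal (P : Pref M W) : DAState M W :=
  daRun P (Fintype.card M * (Fintype.card W + 1) + 1) daInit

/-- The partner of woman `b` under the man-proposing DA matching. -/
def daNu (P : Pref M W) (b : W) : Option M := (daFinal P).hold b

/-- The partner of man `a` under the man-proposing DA matching. -/
def daMu (P : Pref M W) (a : M) : Option W :=
  if h : ∃ b, (daFinal P).hold b = some a then some h.choose else none

/-- Man `a` proposes to woman `b` at some point during the run of the
man-proposing deferred acceptance algorithm. -/
def Proposes (P : Pref M W) (a : M) (b : W) : Prop :=
  ∃ n, IsFree (daRun P n daInit) a ∧ target P a ((daRun P n daInit).next a) = some b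

end

noncomputable section RevelationGame

variable (M W : Type) [Fintype M] [Fintype W] [DecidableEq M] [DecidableEq W]

/-- Pure strategies in the preference revelation game: a player submits a
strict ranking of the opposite side together with the option of being single. -/
abbrev Strat : M ⊕ W → Type := fun i =>
  match i with
  | Sum.inl _ => Option W ≃ Fin (Fintype.card W + 1)
  | Sum.inr _ => Option M ≃ Fin (Fintype.card M + 1)

instance instStratFintype : ∀ i : M ⊕ W, Fintype (Strat M W i)
  | Sum.inl _ => inferInstanceAs (Fintype (Option W ≃ Fin (Fintype.card W + 1)))
  | Sum.inr _ => inferInstanceAs (Fintype (Option M ≃ Fin (Fintype.card M + 1)))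

variable {M W}

/-- The preference profile induced by a report profile. -/
def reportPref (r : ∀ i : M ⊕ W, Strat M W i) : Pref M W where
  mrank a o := ((r (Sum.inl a)) o : ℕ)
  wrank b o := ((r (Sum.inr b)) o : ℕ)
  minj a _ _ h := (r (Sum.inl a)).injective (Fin.val_injective h)
  winj b _ _ h := (r (Sum.inr b)).injective (Fin.val_injective h)

/-- A mixed strategy profile: one probability distribution per player. -/
def IsMixed (x : ∀ i : M ⊕ W, Strat M W i → ℝ) : Prop :=
  ∀ i, (∀ h, 0 ≤ x i h) ∧ ∑ h, x i h = 1

/-- The mixed profile `x` is supported on the product set `H`. -/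
def SupportedOn (x : ∀ i : M ⊕ W, Strat M W i → ℝ)
    (H : ∀ i : M ⊕ W, Set (Strat M W i)) : Prop :=
  ∀ i h, x i h ≠ 0 → h ∈ H i

/-- Expected payoff to player `i` under a mixed strategy profile `x`. -/
def expPay (π : ∀ _ : M ⊕ W, (∀ j : M ⊕ W, Strat M W j) → ℝ) (i : M ⊕ W)
    (x : ∀ j : M ⊕ W, Strat M W j → ℝ) : ℝ :=
  ∑ s : ∀ j : M ⊕ W, Strat M W j, (∏ j, x j (s j)) * π i s

/-- The Dirac (pure) mixed strategy on `h`. -/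
def delta {i : M ⊕ W} (h : Strat M W i) : Strat M W i → ℝ :=
  fun t => if t = h then 1 else 0

/-- `H` is closed under weakly better replies: any pure strategy of a player
that earns at least the average payoff against some mixed profile supported on
`H` already belongs to the player's component of `H`. -/
def CUWBR (π : ∀ _ : M ⊕ W, (∀ j : M ⊕ W, Strat M W j) → ℝ)
    (H : ∀ i : M ⊕ W, Set (Strat M W i)) : Prop :=
  ∀ (i : M ⊕ W) (h : Strat M W i),
    (∃ x, IsMixed x ∧ SupportedOn x H ∧
      expPay π i x ≤ expPay π i (Function.update x i (delta h))) → h ∈ H i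

/-- Payoffs of the preference revelation game induced by the man-proposing
deferred acceptance algorithm: each player's payoff is a strictly decreasing
function of the true-preference rank of the partner assigned by DA run on the
reported profile. -/
def daPayoff (P : Pref M W) (um : M → ℕ → ℝ) (uw : W → ℕ → ℝ) :
    ∀ _ : M ⊕ W, (∀ j : M ⊕ W, Strat M W j) → ℝ := fun i r =>
  match i with
  | Sum.inl a => um a (P.mrank a (daMu (reportPref r) a))
  | Sum.inr b => uw b (P.wrank b (daNu (reportPref r) b))

end RevelationGame

/-!
Take a profile in `H` and let a player whom `μ` gives a truly unacceptable partner deviate to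
the report declaring everybody unacceptable. Deferred acceptance then leaves that player single,
which is strictly better for them, so by closure the deviation stays in `H`. But every profile
in `H` yields `μ`, so the player is single under `μ` after all.
-/

section DeferredAcceptance

variable {M W : Type} {P : Pref M W}

theorem mAcc_of_target_eq_some [Fintype W] {a : M} {k : ℕ} {b : W}
    (h : target P a k = some b) : mAcc P a b := by
  unfold target at h
  split at h
  · rename_i hex
    cases h
    exact hex.choose_spec.1
  · cases h

theorem mem_and_wAcc_of_best_eq_some [Fintype M] {b : W} {c : Finset M} {a : M}
    (h : best P b c = some a) : a ∈ c ∧ wAcc P b a := by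
  unfold best at h
  split at h
  · rename_i hex
    cases h
    exact ⟨hex.choose_spec.1, hex.choose_spec.2.1⟩
  · cases h

theorem daRun_induction [Fintype M] [Fintype W] {p : DAState M W → Prop}
    (hp : ∀ s, p s → p (daStep P s)) : ∀ n s, p s → p (daRun P n s)
  | 0, _, hs => hs
  | n + 1, s, hs => by
    rw [daRun]
    split
    · exact hs
    · exact daRun_induction hp n _ (hp s hs)

theorem daMu_eq_none_of_forall_not_mAcc [Fintype M] [Fintype W] {a : M}
    (hacc : ∀ b, ¬ mAcc P a b) : daMu P a = none := by
  have hfree : ∀ s : DAState M W, IsFree s a → IsFree (daStep P s) a := by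
    intro s hs b hb
    obtain ⟨hmem, -⟩ := mem_and_wAcc_of_best_eq_some hb
    rcases Finset.mem_union.mp hmem with hnew | hold
    · exact hacc b (mAcc_of_target_eq_some (Finset.mem_filter.mp hnew).2.2)
    · exact hs b (by simpa using hold)
  unfold daMu
  rw [dif_neg]
  rintro ⟨b, hb⟩
  exact daRun_induction hfree _ daInit (fun _ => by simp [daInit]) b hb

theorem daNu_eq_none_of_forall_not_wAcc [Fintype M] [Fintype W] {b : W}
    (hacc : ∀ a, ¬ wAcc P b a) : daNu P b = none := by
  refine daRun_induction (p := fun s => s.hold b = none) (fun s _ => ?_) _ daInit rfl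
  show best P b _ = none
  unfold best
  rw [dif_neg]
  rintro ⟨a, -, ha, -⟩
  exact hacc a ha

end DeferredAcceptance

section PureProfiles

variable {M W : Type} [Fintype M] [Fintype W]

theorem supportedOn_delta {r : ∀ i : M ⊕ W, Strat M W i} {H : ∀ i : M ⊕ W, Set (Strat M W i)}
    (hr : ∀ i, r i ∈ H i) : SupportedOn (fun j => delta (r j)) H := by
  intro j t ht
  obtain rfl : t = r j := by
    by_contra hne
    simp [delta, hne] at ht
  exact hr j

variable [DecidableEq M] [DecidableEq W]

theorem isMixed_delta (r : ∀ i : M ⊕ W, Strat M W i) : IsMixed fun j => delta (r j) :=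
  fun i => ⟨fun t => by dsimp only [delta]; split <;> norm_num, by simp [delta]⟩

theorem expPay_delta (π : ∀ _ : M ⊕ W, (∀ j : M ⊕ W, Strat M W j) → ℝ)
    (i : M ⊕ W) (r : ∀ j : M ⊕ W, Strat M W j) :
    expPay π i (fun j => delta (r j)) = π i r := by
  unfold expPay
  rw [Finset.sum_eq_single_of_mem r (Finset.mem_univ r)]
  · simp [delta]
  · intro s _ hs
    obtain ⟨j, hj⟩ := Function.ne_iff.mp hs
    rw [Finset.prod_eq_zero (Finset.mem_univ j) (by simp [delta, hj]), zero_mul]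

theorem update_delta (r : ∀ j : M ⊕ W, Strat M W j) (i : M ⊕ W) (h : Strat M W i) :
    Function.update (fun j => delta (r j)) i (delta h) =
      fun j => delta (Function.update r i h j) := by
  funext j
  rcases eq_or_ne j i with rfl | hj
  · simp
  · simp [Function.update_of_ne hj]

theorem CUWBR.update_mem {π : ∀ _ : M ⊕ W, (∀ j : M ⊕ W, Strat M W j) → ℝ}
    {H : ∀ i : M ⊕ W, Set (Strat M W i)} (hcl : CUWBR π H)
    {r : ∀ j : M ⊕ W, Strat M W j} (hr : ∀ j, r j ∈ H j) {i : M ⊕ W} {h : Strat M W i}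
    (hle : π i r ≤ π i (Function.update r i h)) : ∀ j, Function.update r i h j ∈ H j := by
  have hh : h ∈ H i := hcl i h ⟨_, isMixed_delta r, supportedOn_delta hr, by
    rwa [expPay_delta, update_delta, expPay_delta]⟩
  intro j
  rcases eq_or_ne j i with rfl | hj
  · simpa using hh
  · simpa [Function.update_of_ne hj] using hr j

end PureProfiles

section SingleFirst

/-- Ranking being single first declares every partner unacceptable. -/
noncomputable def singleFirst (α : Type) [Fintype α] : Option α ≃ Fin (Fintype.card α + 1) :=
  (Equiv.optionCongr (Fintype.equivFin α)).trans (finSuccEquiv _).symm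

@[simp]
theorem singleFirst_none (α : Type) [Fintype α] : singleFirst α none = 0 := by
  simp [singleFirst]

variable {M W : Type} [Fintype M] [Fintype W] [DecidableEq M] [DecidableEq W]

theorem daMu_update_singleFirst (r : ∀ i : M ⊕ W, Strat M W i) (a : M) :
    daMu (reportPref (Function.update r (Sum.inl a) (singleFirst W))) a = none := by
  refine daMu_eq_none_of_forall_not_mAcc fun b hb => ?_
  simp [mAcc, reportPref] at hb

theorem daNu_update_singleFirst (r : ∀ i : M ⊕ W, Strat M W i) (b : W) :
    daNu (reportPref (Function.update r (Sum.inr b) (singleFirst M))) b = none := by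
  refine daNu_eq_none_of_forall_not_wAcc fun a ha => ?_
  simp [wAcc, reportPref] at ha

end SingleFirst

/-- If a matching `μ` has a partial preimage `H` that is closed
under weakly better replies in the preference revelation game induced by the
man-proposing deferred acceptance mechanism (with payoffs strictly decreasing in
true-preference rank), then `μ` is individually rational w.r.t. the true
preferences. -/
theorem cuwbr_indiv_rational {M W : Type} [Fintype M] [Fintype W]
    [DecidableEq M] [DecidableEq W] (P : Pref M W)
    (um : M → ℕ → ℝ) (uw : W → ℕ → ℝ)
    (hum : ∀ a x y, x < y → um a y < um a x)
    (huw : ∀ b x y, x < y → uw b y < uw b x)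
    (μ : Matching M W) (H : ∀ i : M ⊕ W, Set (Strat M W i))
    (hpp : ∀ r : ∀ i : M ⊕ W, Strat M W i, (∀ i, r i ∈ H i) →
      daMu (reportPref r) = μ.mu ∧ daNu (reportPref r) = μ.nu)
    (hne : ∃ r : ∀ i : M ⊕ W, Strat M W i, ∀ i, r i ∈ H i)
    (hcl : CUWBR (daPayoff P um uw) H) :
    IndivRational P μ := by
  obtain ⟨r, hr⟩ := hne
  refine ⟨fun a hlt => ?_, fun b hlt => ?_⟩
  · have hdev := hcl.update_mem hr (i := Sum.inl a) (h := singleFirst W) <| by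
      show um a (P.mrank a (daMu (reportPref r) a)) ≤ um a (P.mrank a (daMu _ a))
      rw [(hpp r hr).1, daMu_update_singleFirst]
      exact (hum a _ _ hlt).le
    have hsingle : μ.mu a = none := by
      rw [← (hpp _ hdev).1, daMu_update_singleFirst]
    exact lt_irrefl _ (hsingle ▸ hlt)
  · have hdev := hcl.update_mem hr (i := Sum.inr b) (h := singleFirst M) <| by
      show uw b (P.wrank b (daNu (reportPref r) b)) ≤ uw b (P.wrank b (daNu _ b))
      rw [(hpp r hr).2, daNu_update_singleFirst]
      exact (huw b _ _ hlt).le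
    have hsingle : μ.nu b = none := by
      rw [← (hpp _ hdev).2, daNu_update_singleFirst]
    exact lt_irrefl _ (hsingle ▸ hlt)
end

section
/- In the marriage problem with preference profile P2 = (M3,M1,M1,W2,W5,W1), with men truthful under the man-proposing DA algorithm, the set H2 = {W1} × {W5,W6} × {W1,...,W6} of women's report profiles is a partial preimage of μ^W_2 = [(m1,w1),(m2,w3),(m3,w2)]: every report profile in H2 yields μ^W_2. -/
open scoped Classical

/-- The rank function of the strict preference list `(a, b, c)` over `Fin 3`
(with staying single ranked last). -/
def pl (a b _c : Fin 3) : Option (Fin 3) → ℕ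
  | some x => if x = a then 0 else if x = b then 1 else 2
  | none => 3

/-- The six possible strict preference lists over three partners, labelled
`0,…,5` for `M1,…,M6` (equivalently `W1,…,W6`):
`(1,2,3), (1,3,2), (2,1,3), (2,3,1), (3,1,2), (3,2,1)`. -/
def lab : Fin 6 → Option (Fin 3) → ℕ :=
  ![pl 0 1 2, pl 0 2 1, pl 1 0 2, pl 1 2 0, pl 2 0 1, pl 2 1 0]

lemma lab_inj : ∀ (k : Fin 6) (x y : Option (Fin 3)), lab k x = lab k y → x = y := by
  decide

/-- The `3 × 3` marriage problem in which man `a` has the preference list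
labelled `pm a` and woman `b` the list labelled `pw b`. -/
def mkPref (pm pw : Fin 3 → Fin 6) : Pref (Fin 3) (Fin 3) where
  mrank a := lab (pm a)
  wrank b := lab (pw b)
  minj a := lab_inj (pm a)
  winj b := lab_inj (pw b)

/-- The matching pairing man `a` with woman `f a` (with inverse map `g`). -/
def mkMatch (f g : Fin 3 → Fin 3) (hc : ∀ a b, f a = b ↔ g b = a) :
    Matching (Fin 3) (Fin 3) :=
  ⟨fun a => some (f a), fun b => some (g b), by simp [hc]⟩

/-- Men's true preferences in `P2`: `(M3, M1, M1)`. -/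
def menP2 : Fin 3 → Fin 6 := ![2, 0, 0]

/-- `μ^W_2 = [(m1,w1), (m2,w3), (m3,w2)]`. -/
def muW2 : Matching (Fin 3) (Fin 3) := mkMatch ![0, 2, 1] ![0, 2, 1] (by decide)

/-! On every report profile of `H2` the man-proposing deferred acceptance algorithm runs
through the same five rounds. Men's proposals depend only on their true lists, and the women's
decisions only use that `w1` ranks `m1 > m2 > m3`, that `w2` ranks `m3` first, and that everybody
is acceptable. The rounds are: `m1 → w2` and `m2, m3 → w1`, where `w1` keeps `m2`;
`m3 → w2`, who drops `m1`; `m1 → w1`, who drops `m2`; `m2 → w2`, who rejects him;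
`m2 → w3`, who keeps him. -/

section DeferredAcceptance

variable {M W : Type} {P : Pref M W}

attribute [ext] DAState

instance (a : M) (b : W) : Decidable (mAcc P a b) := Nat.decLt _ _

instance (b : W) (a : M) : Decidable (wAcc P b a) := Nat.decLt _ _

instance [DecidableEq M] [Fintype W] (s : DAState M W) (a : M) : Decidable (IsFree s a) :=
  Fintype.decidableForallFintype

section Target

variable [Fintype W]

def acceptableAbove (P : Pref M W) (a : M) (b : W) : Finset W :=
  Finset.univ.filter fun b' => mAcc P a b' ∧ P.mrank a (some b') < P.mrank a (some b)

lemma card_acceptableAbove_lt_of_mrank_lt {a : M} {b b' : W} (hb : mAcc P a b)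
    (h : P.mrank a (some b) < P.mrank a (some b')) :
    (acceptableAbove P a b).card < (acceptableAbove P a b').card := by
  refine Finset.card_lt_card ⟨fun x hx => ?_, fun hsub => ?_⟩
  · simp only [acceptableAbove, Finset.mem_filter, Finset.mem_univ, true_and] at hx ⊢
    exact ⟨hx.1, hx.2.trans h⟩
  · have := hsub (by simpa [acceptableAbove] using ⟨hb, h⟩ : b ∈ acceptableAbove P a b')
    simp [acceptableAbove] at this

lemma eq_of_card_acceptableAbove_eq {a : M} {b b' : W} (hb : mAcc P a b) (hb' : mAcc P a b')
    (h : (acceptableAbove P a b).card = (acceptableAbove P a b').card) : b = b' := by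
  rcases lt_trichotomy (P.mrank a (some b)) (P.mrank a (some b')) with hlt | heq | hgt
  · exact absurd h (card_acceptableAbove_lt_of_mrank_lt hb hlt).ne
  · exact Option.some_injective _ (P.minj a _ _ heq)
  · exact absurd h (card_acceptableAbove_lt_of_mrank_lt hb' hgt).ne'

lemma card_acceptableAbove_lt_card (a : M) (b : W) :
    (acceptableAbove P a b).card < Fintype.card W :=
  Finset.card_lt_univ_of_notMem (x := b) (by simp [acceptableAbove])

lemma target_eq_some_iff {a : M} {k : ℕ} {b : W} :
    target P a k = some b ↔ mAcc P a b ∧ (acceptableAbove P a b).card = k := by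
  unfold target
  split_ifs with hex
  · obtain ⟨hacc, hk⟩ := hex.choose_spec
    replace hk : (acceptableAbove P a hex.choose).card = k := by
      convert hk using 2; unfold acceptableAbove; congr
    refine ⟨fun h => Option.some_injective _ h ▸ ⟨hacc, hk⟩, fun ⟨hb, hbk⟩ => ?_⟩
    exact congrArg some (eq_of_card_acceptableAbove_eq hacc hb (hk.trans hbk.symm))
  · refine iff_of_false (by simp) fun ⟨hb, hbk⟩ => hex ⟨b, hb, ?_⟩
    convert hbk using 2; unfold acceptableAbove; congr

lemma target_eq_none_of_card_le {a : M} {k : ℕ} (hk : Fintype.card W ≤ k) :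
    target P a k = none := by
  refine Option.eq_none_iff_forall_ne_some.2 fun b hb => ?_
  have := (target_eq_some_iff.1 hb).2 ▸ card_acceptableAbove_lt_card (P := P) a b
  omega

end Target

section Best

variable [Fintype M]

lemma best_eq_some_iff {b : W} {c : Finset M} {a : M} :
    best P b c = some a ↔ a ∈ c ∧ wAcc P b a ∧
      ∀ a' ∈ c, wAcc P b a' → P.wrank b (some a) ≤ P.wrank b (some a') := by
  unfold best
  split_ifs with hex
  · obtain ⟨hc, hacc, hmin⟩ := hex.choose_spec
    refine ⟨fun h => Option.some_injective _ h ▸ ⟨hc, hacc, hmin⟩,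
      fun ⟨ha, hacc', hmin'⟩ => ?_⟩
    exact congrArg some <| Option.some_injective _ <|
      P.winj b _ _ (le_antisymm (hmin a ha hacc') (hmin' _ hc hacc))
  · simpa using fun ha hacc hmin => hex ⟨a, ha, hacc, hmin⟩

lemma best_eq_iff {b : W} {c : Finset M} {o : Option M} :
    best P b c = o ↔ ∀ a, o = some a ↔ a ∈ c ∧ wAcc P b a ∧
      ∀ a' ∈ c, wAcc P b a' → P.wrank b (some a) ≤ P.wrank b (some a') := by
  refine ⟨by rintro rfl a; exact best_eq_some_iff, fun h => ?_⟩
  cases o with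
  | some a => exact best_eq_some_iff.2 ((h a).1 rfl)
  | none =>
    refine Option.eq_none_iff_forall_ne_some.2 fun a ha => ?_
    simpa using (h a).2 (best_eq_some_iff.1 ha)

end Best

section Run

variable [Fintype M] [Fintype W]

-- `daStep` with its classical decidability instances replaced by computable ones, so that
-- concrete rounds can be checked by `decide`.
lemma daStep_next [DecidableEq M] (s : DAState M W) (a : M) :
    (daStep P s).next a =
      if IsFree s a ∧ (target P a (s.next a)).isSome then s.next a + 1 else s.next a := by
  unfold daStep; dsimp only; split_ifs <;> rfl

lemma daStep_hold [DecidableEq M] [DecidableEq W] (s : DAState M W) (b : W) :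
    (daStep P s).hold b = best P b
      ((Finset.univ.filter fun a => IsFree s a ∧ target P a (s.next a) = some b) ∪
        (s.hold b).toFinset) := by
  unfold daStep; dsimp only; congr; exact Subsingleton.elim _ _

lemma daRun_of_finished {s : DAState M W} (h : Finished P s) : ∀ n, daRun P n s = s
  | 0 => rfl
  | _ + 1 => by rw [daRun, if_pos h]

lemma daRun_eq_of_steps (σ : ℕ → DAState M W) {n m : ℕ} (hnm : n ≤ m)
    (hstep : ∀ i < n, ¬ Finished P (σ i) ∧ daStep P (σ i) = σ (i + 1))
    (hfin : Finished P (σ n)) : daRun P m (σ 0) = σ n := by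
  induction n generalizing σ m with
  | zero => exact daRun_of_finished hfin m
  | succ n ih =>
    obtain ⟨m, rfl⟩ : ∃ m', m = m' + 1 := ⟨m - 1, by omega⟩
    obtain ⟨hnf, hσ⟩ := hstep 0 n.succ_pos
    rw [daRun, if_neg hnf, hσ]
    exact ih (fun i => σ (i + 1)) (by omega) (fun i hi => hstep (i + 1) (by omega)) hfin

lemma daMu_eq_of_daNu_eq (μ : Matching M W) (h : daNu P = μ.nu) : daMu P = μ.mu := by
  funext a
  have hν : ∀ b, (daFinal P).hold b = some a ↔ μ.mu a = some b := fun b => by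
    rw [μ.consistent, ← h]; rfl
  unfold daMu
  split_ifs with hex
  · exact ((hν _).1 hex.choose_spec).symm
  · cases hμ : μ.mu a with
    | none => rfl
    | some b => exact absurd ⟨b, (hν b).2 hμ⟩ hex

end Run

end DeferredAcceptance

-- Indices are 0-based: `m1 : (w2, w1, w3)` and `m2, m3 : (w1, w2, w3)`.
def menP2Lists : Fin 3 → List (Fin 3) := ![[1, 0, 2], [0, 1, 2], [0, 1, 2]]

lemma target_mkPref_menP2 (pw : Fin 3 → Fin 6) (a : Fin 3) (k : ℕ) :
    target (mkPref menP2 pw) a k = (menP2Lists a)[k]? := by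
  rcases lt_or_ge k 3 with hk | hk
  · interval_cases k <;> fin_cases a <;> exact target_eq_some_iff.2 (of_decide_eq_true rfl)
  · rw [target_eq_none_of_card_le (by simpa using hk)]
    fin_cases a <;> simpa [menP2Lists] using hk

def p2Trace : ℕ → DAState (Fin 3) (Fin 3)
  | 0 => daInit
  | 1 => ⟨![1, 1, 1], ![some 1, some 0, none]⟩
  | 2 => ⟨![1, 1, 2], ![some 1, some 2, none]⟩
  | 3 => ⟨![2, 1, 2], ![some 0, some 2, none]⟩
  | 4 => ⟨![2, 2, 2], ![some 0, some 2, none]⟩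
  | _ => ⟨![2, 3, 2], ![some 0, some 2, some 1]⟩

lemma finished_p2Trace_iff (pw : Fin 3 → Fin 6) :
    ∀ i ≤ 5, Finished (mkPref menP2 pw) (p2Trace i) ↔ i = 5 := by
  simp only [Finished, target_mkPref_menP2]
  decide

lemma daStep_p2Trace {k2 : Fin 6} (hk2 : k2 = 4 ∨ k2 = 5) (k3 : Fin 6) :
    ∀ i < 5, daStep (mkPref menP2 ![0, k2, k3]) (p2Trace i) = p2Trace (i + 1) := by
  intro i hi
  ext a
  · rw [daStep_next, target_mkPref_menP2]
    decide +revert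
  · rw [daStep_hold, best_eq_iff]
    simp only [target_mkPref_menP2]
    decide +revert

lemma daNu_mkPref_menP2_of_H2 {k2 : Fin 6} (hk2 : k2 = 4 ∨ k2 = 5) (k3 : Fin 6) :
    daNu (mkPref menP2 ![0, k2, k3]) = muW2.nu := by
  have hrun : daFinal (mkPref menP2 ![0, k2, k3]) = p2Trace 5 :=
    daRun_eq_of_steps p2Trace (by simp)
      (fun i hi => ⟨fun h => hi.ne ((finished_p2Trace_iff _ i hi.le).1 h),
        daStep_p2Trace hk2 k3 i hi⟩)
      ((finished_p2Trace_iff _ 5 le_rfl).2 rfl)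
  funext b
  rw [daNu, hrun]
  fin_cases b <;> rfl

/-- In the problem `P2` with men truthful under the
man-proposing DA algorithm, `H2 = {W1} × {W5,W6} × {W1,…,W6}` is a partial
preimage of `μ^W_2`: every such report profile of the women yields `μ^W_2`. -/
theorem P2_H2_partial_preimage :
    ∀ k2 : Fin 6, (k2 = 4 ∨ k2 = 5) → ∀ k3 : Fin 6,
      daMu (mkPref menP2 ![0, k2, k3]) = muW2.mu ∧
      daNu (mkPref menP2 ![0, k2, k3]) = muW2.nu := by
  intro k2 hk2 k3
  have hν := daNu_mkPref_menP2_of_H2 hk2 k3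
  exact ⟨daMu_eq_of_daNu_eq muW2 hν, hν⟩
end
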